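/- arXiv:2512.15460 — 4 statements merged into one kernel-verified Lean document; each statement's English description precedes it below -/
import Mathlib

section
/- (Theorem 2, InvLoss under data-level noise perturbation.) For every target x ∈ ℝ^m and noise ε ∈ ℝ^m injected into the input, the Invertibility Loss under defense, inf over all linear maps A : ℝ^p → ℝ^m of ‖A (G (x + ε)) − x‖², is at most Σ_{i=k+1}^m ⟨v_i, x⟩² + Σ_{i=1}^k ⟨v_i, ε⟩². -/
open scoped InnerProductSpace BigOperators

/-- Theorem 2 of the paper, InvLoss under data-level noise perturbation:
`inf_A ‖A (G (x + ε)) − x‖² ≤ ∑_(i=k+1)^m ⟨v_i, x⟩² + ∑_(i=1)^k ⟨v_i, ε⟩²`. -/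
theorem invLoss_DNP_upper_bound
    (m p : ℕ) (hm : 0 < m) (hp : 0 < p)
    (v : OrthonormalBasis (Fin m) ℝ (EuclideanSpace ℝ (Fin m)))
    (u : Fin (min m p) → EuclideanSpace ℝ (Fin p)) (hu : Orthonormal ℝ u)
    (σ : Fin (min m p) → ℝ) (hσ : ∀ i, 0 ≤ σ i)
    (G : EuclideanSpace ℝ (Fin m) →ₗ[ℝ] EuclideanSpace ℝ (Fin p))
    (hG : ∀ x, G x = ∑ i : Fin (min m p),
      (σ i * ⟪v (Fin.castLE (min_le_left m p) i), x⟫_ℝ) • u i)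
    (k : ℕ) (hk : k ≤ min m p)
    (hσk : ∀ i : Fin (min m p), (i : ℕ) < k → 0 < σ i)
 :
    ∀ x ε : EuclideanSpace ℝ (Fin m),
      (⨅ A : EuclideanSpace ℝ (Fin p) →ₗ[ℝ] EuclideanSpace ℝ (Fin m), ‖A (G (x + ε)) - x‖ ^ 2)
        ≤ ∑ i ∈ Finset.univ.filter (fun i : Fin m => k ≤ (i : ℕ)), ⟪v i, x⟫_ℝ ^ 2 + ∑ i ∈ Finset.univ.filter (fun i : Fin m => (i : ℕ) < k), ⟪v i, ε⟫_ℝ ^ 2 := by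
  intro x ε
  set z := x + ε with hz
  set cst : Fin (min m p) → Fin m := Fin.castLE (min_le_left m p) with hcst
  -- the candidate attacker
  set A : EuclideanSpace ℝ (Fin p) →ₗ[ℝ] EuclideanSpace ℝ (Fin m) :=
    ∑ i ∈ Finset.univ.filter (fun i : Fin (min m p) => (i : ℕ) < k),
      (σ i)⁻¹ • ((innerSL ℝ (u i)).toLinearMap.smulRight (v (cst i))) with hA
  -- value of A on G z
  have hAGz : A (G z) = ∑ i ∈ Finset.univ.filter (fun i : Fin (min m p) => (i : ℕ) < k),
      ⟪v (cst i), z⟫_ℝ • v (cst i) := by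
    rw [hA, LinearMap.sum_apply]
    refine Finset.sum_congr rfl fun i hi => ?_
    have hik : (i : ℕ) < k := by simpa using hi
    have hσi : σ i ≠ 0 := ne_of_gt (hσk i hik)
    have : ⟪u i, G z⟫_ℝ = σ i * ⟪v (cst i), z⟫_ℝ := by
      rw [hG]
      exact hu.inner_right_fintype _ i
    simp only [LinearMap.smul_apply, LinearMap.smulRight_apply,
      ContinuousLinearMap.coe_coe, innerSL_apply_apply, this, smul_smul]
    rw [← mul_assoc, inv_mul_cancel₀ hσi, one_mul]
  -- reindex the sum over Fin m
  have hreindex : A (G z) = ∑ j ∈ Finset.univ.filter (fun j : Fin m => (j : ℕ) < k),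
      ⟪v j, z⟫_ℝ • v j := by
    rw [hAGz]
    refine Finset.sum_bij (fun a _ => cst a) ?_ ?_ ?_ ?_
    · intro a ha
      have : (a : ℕ) < k := by simpa using ha
      simpa [hcst] using this
    · intro a₁ h₁ a₂ h₂ h
      exact Fin.castLE_injective _ h
    · intro b hb
      have hbk : (b : ℕ) < k := by simpa using hb
      exact ⟨⟨b, lt_of_lt_of_le hbk hk⟩, by simpa using hbk, by simp [hcst, Fin.ext_iff]⟩
    · intros; rfl
  -- express the error as a combination of basis vectors
  set c : Fin m → ℝ := fun j => if (j : ℕ) < k then ⟪v j, ε⟫_ℝ else -⟪v j, x⟫_ℝ with hc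
  have hdiff : A (G z) - x = ∑ j, c j • v j := by
    rw [hreindex]
    nth_rw 1 [← v.sum_repr' x]
    rw [← Finset.sum_filter_add_sum_filter_not Finset.univ (fun j : Fin m => (j : ℕ) < k)
      (fun j => c j • v j)]
    rw [← Finset.sum_filter_add_sum_filter_not Finset.univ (fun j : Fin m => (j : ℕ) < k)
      (fun j => ⟪v j, x⟫_ℝ • v j)]
    have h1 : ∀ j ∈ Finset.univ.filter (fun j : Fin m => (j : ℕ) < k),
        c j • v j = ⟪v j, z⟫_ℝ • v j - ⟪v j, x⟫_ℝ • v j := by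
      intro j hj
      have : (j : ℕ) < k := by simpa using hj
      rw [hc]; simp only [this, if_true]
      rw [← sub_smul, hz, inner_add_right]; ring_nf
    have h2 : ∀ j ∈ Finset.univ.filter (fun j : Fin m => ¬ (j : ℕ) < k),
        c j • v j = -(⟪v j, x⟫_ℝ • v j) := by
      intro j hj
      have : ¬ (j : ℕ) < k := by simpa using hj
      rw [hc]; simp [this]
    rw [Finset.sum_congr rfl h1, Finset.sum_congr rfl h2]
    simp [Finset.sum_sub_distrib]
    abel
  -- compute the norm
  have hnorm : ‖A (G z) - x‖ ^ 2 = ∑ j, c j ^ 2 := by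
    rw [hdiff, ← real_inner_self_eq_norm_sq]
    rw [sum_inner]
    refine Finset.sum_congr rfl fun j _ => ?_
    rw [real_inner_smul_left, v.orthonormal.inner_right_fintype, sq]
  -- the infimum is at most the value at A
  refine le_trans (ciInf_le ⟨0, fun y hy => ?_⟩ A) ?_
  · obtain ⟨B, rfl⟩ := hy
    positivity
  · rw [hnorm]
    rw [← Finset.sum_filter_add_sum_filter_not Finset.univ (fun j : Fin m => (j : ℕ) < k)
      (fun j => c j ^ 2)]
    have h1 : ∑ j ∈ Finset.univ.filter (fun j : Fin m => (j : ℕ) < k), c j ^ 2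
        = ∑ j ∈ Finset.univ.filter (fun j : Fin m => (j : ℕ) < k), ⟪v j, ε⟫_ℝ ^ 2 := by
      refine Finset.sum_congr rfl fun j hj => ?_
      have : (j : ℕ) < k := by simpa using hj
      rw [hc]; simp [this]
    have h2 : ∑ j ∈ Finset.univ.filter (fun j : Fin m => ¬ (j : ℕ) < k), c j ^ 2
        = ∑ j ∈ Finset.univ.filter (fun j : Fin m => k ≤ (j : ℕ)), ⟪v j, x⟫_ℝ ^ 2 := by
      rw [Finset.sum_congr ?_ ?_]
      · ext j; simp [not_lt]
      · intro j hj
        have : ¬ (j : ℕ) < k := by simp at hj; omega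
        rw [hc]; simp [this]
    rw [h1, h2, add_comm]
end

section
/- (Core identity behind Theorem 3, gradient/embedding-level noise perturbation.) For every target x ∈ ℝ^m and every noise vector ε ∈ ℝ^p added to the shared information G x, the squared reconstruction error of the rank-k optimal DRA attacker satisfies the exact identity ‖Ã_k (G x + ε) − x‖² = Σ_{i=k+1}^m ⟨v_i, x⟩² + Σ_{i=1}^k ⟨u_i, ε⟩² / σ_i². -/
open scoped InnerProductSpace BigOperators

/-- core identity behind Theorem 3, gradient/embedding-level noise perturbation:
for noise `ε` added to the shared information `G x`,
`‖Ã_k (G x + ε) − x‖² = ∑_(i=k+1)^m ⟨v_i, x⟩² + ∑_(i=1)^k ⟨u_i, ε⟩² / σ_i²`. -/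
theorem rank_k_attacker_error_GENP_identity
    (m p : ℕ) (hm : 0 < m) (hp : 0 < p)
    (v : OrthonormalBasis (Fin m) ℝ (EuclideanSpace ℝ (Fin m)))
    (u : Fin (min m p) → EuclideanSpace ℝ (Fin p)) (hu : Orthonormal ℝ u)
    (σ : Fin (min m p) → ℝ) (hσ : ∀ i, 0 ≤ σ i)
    (G : EuclideanSpace ℝ (Fin m) →ₗ[ℝ] EuclideanSpace ℝ (Fin p))
    (hG : ∀ x, G x = ∑ i : Fin (min m p),
      (σ i * ⟪v (Fin.castLE (min_le_left m p) i), x⟫_ℝ) • u i)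
    (k : ℕ) (hk : k ≤ min m p)
    (hσk : ∀ i : Fin (min m p), (i : ℕ) < k → 0 < σ i)
    (Atil : EuclideanSpace ℝ (Fin p) →ₗ[ℝ] EuclideanSpace ℝ (Fin m))
    (hAtil : ∀ y, Atil y = ∑ i ∈ Finset.univ.filter (fun i : Fin (min m p) => (i : ℕ) < k),
      ((σ i)⁻¹ * ⟪u i, y⟫_ℝ) • v (Fin.castLE (min_le_left m p) i))
 :
    ∀ (x : EuclideanSpace ℝ (Fin m)) (ε : EuclideanSpace ℝ (Fin p)),
      ‖Atil (G x + ε) - x‖ ^ 2 = ∑ i ∈ Finset.univ.filter (fun i : Fin m => k ≤ (i : ℕ)), ⟪v i, x⟫_ℝ ^ 2 + ∑ i ∈ Finset.univ.filter (fun i : Fin (min m p) => (i : ℕ) < k), ⟪u i, ε⟫_ℝ ^ 2 / (σ i) ^ 2 := by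
  intro x ε
  set y := Atil (G x + ε) - x with hy
  have huG : ∀ i : Fin (min m p), ⟪u i, G x⟫_ℝ = σ i * ⟪v (Fin.castLE (min_le_left m p) i), x⟫_ℝ := by
    intro i
    rw [hG, inner_sum]
    rw [Finset.sum_eq_single i]
    · rw [real_inner_smul_right, orthonormal_iff_ite.mp hu i i, if_pos rfl, mul_one]
    · intro j _ hj
      rw [real_inner_smul_right]
      rw [orthonormal_iff_ite.mp hu i j, if_neg hj.symm]
      ring
    · simp
  -- inner products with v j
  have hvy : ∀ j : Fin m, ⟪v j, y⟫_ℝ =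
      if h : (j : ℕ) < k then (σ ⟨j, lt_of_lt_of_le h hk⟩)⁻¹ * ⟪u ⟨j, lt_of_lt_of_le h hk⟩, ε⟫_ℝ
      else -⟪v j, x⟫_ℝ := by
    intro j
    have hA : ⟪v j, Atil (G x + ε)⟫_ℝ =
        if h : (j : ℕ) < k then
          ⟪v j, x⟫_ℝ + (σ ⟨j, lt_of_lt_of_le h hk⟩)⁻¹ * ⟪u ⟨j, lt_of_lt_of_le h hk⟩, ε⟫_ℝ
        else 0 := by
      rw [hAtil, inner_sum]
      by_cases h : (j : ℕ) < k
      · rw [dif_pos h]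
        set i0 : Fin (min m p) := ⟨j, lt_of_lt_of_le h hk⟩ with hi0
        rw [Finset.sum_eq_single i0]
        · rw [real_inner_smul_right]
          have : Fin.castLE (min_le_left m p) i0 = j := by ext; simp [hi0]
          rw [this, orthonormal_iff_ite.mp v.orthonormal j j, if_pos rfl]
          rw [inner_add_right, huG i0]
          have hσpos : σ i0 ≠ 0 := (hσk i0 h).ne'
          rw [this]
          field_simp
        · intro b hb hbne
          rw [real_inner_smul_right, orthonormal_iff_ite.mp v.orthonormal j (Fin.castLE (min_le_left m p) b)]
          rw [if_neg, mul_zero]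
          intro hjb
          apply hbne
          ext
          have : ((Fin.castLE (min_le_left m p) b : Fin m) : ℕ) = (b : ℕ) := rfl
          rw [← this, ← hjb]
        · intro hni
          exact absurd (Finset.mem_filter.mpr ⟨Finset.mem_univ i0, h⟩) hni
      · rw [dif_neg h]
        apply Finset.sum_eq_zero
        intro b hb
        rw [real_inner_smul_right, orthonormal_iff_ite.mp v.orthonormal j (Fin.castLE (min_le_left m p) b)]
        rw [if_neg, mul_zero]
        intro hjb
        have hbk : (b : ℕ) < k := by simpa using (Finset.mem_filter.mp hb).2
        have : (j : ℕ) = (b : ℕ) := by rw [hjb]; rfl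
        exact h (this ▸ hbk)
    rw [hy, inner_sub_right, hA]
    by_cases h : (j : ℕ) < k
    · rw [dif_pos h, dif_pos h]; ring
    · rw [dif_neg h, dif_neg h]; ring
  -- norm squared as sum of squared coefficients
  have hnorm : ‖y‖ ^ 2 = ∑ j : Fin m, ⟪v j, y⟫_ℝ ^ 2 := by
    have h1 := v.sum_inner_mul_inner y y
    have h2 : ∀ j : Fin m, ⟪y, v j⟫_ℝ * ⟪v j, y⟫_ℝ = ⟪v j, y⟫_ℝ ^ 2 := by
      intro j; rw [real_inner_comm]; ring
    rw [← real_inner_self_eq_norm_sq, ← h1]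
    exact Finset.sum_congr rfl fun j _ => h2 j
  rw [hnorm]
  rw [← Finset.sum_filter_add_sum_filter_not Finset.univ (fun j : Fin m => (j : ℕ) < k)]
  have hA1 : ∑ j ∈ Finset.univ.filter (fun j : Fin m => (j : ℕ) < k), ⟪v j, y⟫_ℝ ^ 2
      = ∑ i ∈ Finset.univ.filter (fun i : Fin (min m p) => (i : ℕ) < k), ⟪u i, ε⟫_ℝ ^ 2 / (σ i) ^ 2 := by
    refine Finset.sum_bij'
      (fun j hj => (⟨(j : ℕ), lt_of_lt_of_le (by simpa using (Finset.mem_filter.mp hj).2) hk⟩ : Fin (min m p)))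
      (fun i _ => Fin.castLE (min_le_left m p) i) ?_ ?_ ?_ ?_ ?_
    · intro a ha
      simp only [Finset.mem_filter, Finset.mem_univ, true_and]
      simpa using (Finset.mem_filter.mp ha).2
    · intro b hb
      simp only [Finset.mem_filter, Finset.mem_univ, true_and]
      simpa using (Finset.mem_filter.mp hb).2
    · intro a ha; ext; rfl
    · intro b hb; ext; rfl
    · intro a ha
      have hak : (a : ℕ) < k := by simpa using (Finset.mem_filter.mp ha).2
      rw [hvy a, dif_pos hak]
      have hσpos : σ (⟨(a : ℕ), lt_of_lt_of_le hak hk⟩ : Fin (min m p)) ≠ 0 :=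
        (hσk _ hak).ne'
      field_simp
  have hA2 : ∑ j ∈ Finset.univ.filter (fun j : Fin m => ¬ (j : ℕ) < k), ⟪v j, y⟫_ℝ ^ 2
      = ∑ i ∈ Finset.univ.filter (fun i : Fin m => k ≤ (i : ℕ)), ⟪v i, x⟫_ℝ ^ 2 := by
    rw [Finset.sum_congr]
    · apply Finset.filter_congr
      intro j _
      simp [not_lt]
    · intro j hj
      have : ¬ (j : ℕ) < k := not_lt.mpr (by simpa using (Finset.mem_filter.mp hj).2)
      rw [hvy j, dif_neg this]
      ring
  rw [hA1, hA2, add_comm]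
end

section
/- (Theorem 3, InvLoss under gradient/embedding-level noise perturbation.) For every target x ∈ ℝ^m and noise ε ∈ ℝ^p injected into the shared gradients or embeddings, the Invertibility Loss under defense, inf over all linear maps A : ℝ^p → ℝ^m of ‖A (G x + ε) − x‖², is at most Σ_{i=k+1}^m ⟨v_i, x⟩² + Σ_{i=1}^k ⟨u_i, ε⟩² / σ_i². -/
open scoped InnerProductSpace BigOperators

/-!
Expand the reconstruction error in the right singular basis `v`. On the `k` retained directions
the attacker undoes `G` exactly, so only the noise survives there, scaled by `σ_i⁻¹`; on the
remaining directions the attacker outputs nothing, so the error is the component of `x` itself.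
Parseval turns this into the stated sum, and the infimum over all linear attackers is at most
the error of this particular one.
-/

section TruncatedPseudoinverse

variable {ι κ E F : Type*} [Fintype ι]
  [NormedAddCommGroup E] [InnerProductSpace ℝ E] [NormedAddCommGroup F] [InnerProductSpace ℝ F]

/-- `y ↦ ∑ i ∈ s, σ_i⁻¹ ⟪u_i, y⟫ w_i`: the rank-`k` attacker `Ã_k` when `s = {i | i < k}`. -/
noncomputable def truncatedPseudoinverse (u : κ → F) (w : κ → E) (σ : κ → ℝ) (s : Finset κ) :
    F →ₗ[ℝ] E :=
  ∑ i ∈ s, (innerₛₗ ℝ (u i)).smulRight ((σ i)⁻¹ • w i)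

theorem truncatedPseudoinverse_apply (u : κ → F) (w : κ → E) (σ : κ → ℝ) (s : Finset κ) (y : F) :
    truncatedPseudoinverse u w σ s y = ∑ i ∈ s, (⟪u i, y⟫_ℝ / σ i) • w i := by
  simp only [truncatedPseudoinverse, LinearMap.sum_apply, LinearMap.smulRight_apply,
    innerₛₗ_apply_apply, smul_smul, div_eq_mul_inv]

variable (v : OrthonormalBasis ι ℝ E) (e : κ ↪ ι) (u : κ → F) (σ : κ → ℝ) (s : Finset κ)

theorem inner_truncatedPseudoinverse_of_mem {i : κ} (hi : i ∈ s) (y : F) :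
    ⟪v (e i), truncatedPseudoinverse u (v ∘ e) σ s y⟫_ℝ = ⟪u i, y⟫_ℝ / σ i := by
  rw [truncatedPseudoinverse_apply]
  exact (v.orthonormal.comp e e.injective).inner_right_sum _ hi

theorem inner_truncatedPseudoinverse_of_notMem {j : ι} (hj : j ∉ s.map e) (y : F) :
    ⟪v j, truncatedPseudoinverse u (v ∘ e) σ s y⟫_ℝ = 0 := by
  rw [truncatedPseudoinverse_apply, inner_sum]
  refine Finset.sum_eq_zero fun i hi => ?_
  have hji : j ≠ e i := fun h => hj (h ▸ Finset.mem_map_of_mem e hi)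
  rw [real_inner_smul_right, Function.comp_apply, v.orthonormal.inner_eq_zero hji, mul_zero]

theorem norm_truncatedPseudoinverse_sub_sq [Fintype κ] [DecidableEq ι] (hu : Orthonormal ℝ u)
    (hσ : ∀ i ∈ s, σ i ≠ 0) (G : E →ₗ[ℝ] F) (hG : ∀ x, G x = ∑ i, (σ i * ⟪v (e i), x⟫_ℝ) • u i)
    (x : E) (ε : F) :
    ‖truncatedPseudoinverse u (v ∘ e) σ s (G x + ε) - x‖ ^ 2
      = ∑ j ∈ (s.map e)ᶜ, ⟪v j, x⟫_ℝ ^ 2 + ∑ i ∈ s, ⟪u i, ε⟫_ℝ ^ 2 / σ i ^ 2 := by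
  set T := truncatedPseudoinverse u (v ∘ e) σ s
  have retained : ∀ i ∈ s, ⟪v (e i), T (G x + ε) - x⟫_ℝ = ⟪u i, ε⟫_ℝ / σ i := by
    intro i hi
    rw [inner_sub_right, inner_truncatedPseudoinverse_of_mem v e u σ s hi, inner_add_right, hG,
      hu.inner_right_fintype]
    field_simp [hσ i hi]
    ring
  have discarded : ∀ j ∉ s.map e, ⟪v j, T (G x + ε) - x⟫_ℝ = -⟪v j, x⟫_ℝ := by
    intro j hj
    rw [inner_sub_right, inner_truncatedPseudoinverse_of_notMem v e u σ s hj, zero_sub]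
  rw [← v.sum_sq_inner_right, ← Finset.sum_compl_add_sum (s.map e), Finset.sum_map]
  congr 1
  · exact Finset.sum_congr rfl fun j hj => by
      rw [discarded j (Finset.mem_compl.mp hj), neg_sq]
  · exact Finset.sum_congr rfl fun i hi => by
      rw [← div_pow, ← retained i hi]

end TruncatedPseudoinverse

theorem compl_map_castLEEmb_filter_lt {n N k : ℕ} (hnN : n ≤ N) (hk : k ≤ n) :
    ((Finset.univ.filter fun i : Fin n => (i : ℕ) < k).map (Fin.castLEEmb hnN))ᶜ
      = Finset.univ.filter fun j : Fin N => k ≤ (j : ℕ) := by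
  ext j
  simp only [Finset.mem_compl, Finset.mem_map, Finset.mem_filter, Finset.mem_univ, true_and,
    Fin.castLEEmb_apply, not_exists, not_and]
  constructor
  · intro h
    by_contra! hj
    exact h ⟨j, by omega⟩ hj (Fin.ext rfl)
  · rintro hj i hi rfl
    exact absurd hi (by simpa using hj.not_gt)

theorem invLoss_GENP_upper_bound_general
    (m p : ℕ)
    (v : OrthonormalBasis (Fin m) ℝ (EuclideanSpace ℝ (Fin m)))
    (u : Fin (min m p) → EuclideanSpace ℝ (Fin p)) (hu : Orthonormal ℝ u)
    (σ : Fin (min m p) → ℝ)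
    (G : EuclideanSpace ℝ (Fin m) →ₗ[ℝ] EuclideanSpace ℝ (Fin p))
    (hG : ∀ x, G x = ∑ i : Fin (min m p),
      (σ i * ⟪v (Fin.castLE (min_le_left m p) i), x⟫_ℝ) • u i)
    (k : ℕ) (hk : k ≤ min m p)
    (hσk : ∀ i : Fin (min m p), (i : ℕ) < k → 0 < σ i)
 :
    ∀ (x : EuclideanSpace ℝ (Fin m)) (ε : EuclideanSpace ℝ (Fin p)),
      (⨅ A : EuclideanSpace ℝ (Fin p) →ₗ[ℝ] EuclideanSpace ℝ (Fin m), ‖A (G x + ε) - x‖ ^ 2)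
        ≤ ∑ i ∈ Finset.univ.filter (fun i : Fin m => k ≤ (i : ℕ)), ⟪v i, x⟫_ℝ ^ 2 + ∑ i ∈ Finset.univ.filter (fun i : Fin (min m p) => (i : ℕ) < k), ⟪u i, ε⟫_ℝ ^ 2 / (σ i) ^ 2 := by
  intro x ε
  set e := Fin.castLEEmb (min_le_left m p)
  set s := Finset.univ.filter fun i : Fin (min m p) => (i : ℕ) < k
  have hσs : ∀ i ∈ s, σ i ≠ 0 := fun i hi => (hσk i (Finset.mem_filter.mp hi).2).ne'
  refine ciInf_le_of_le ⟨0, by rintro _ ⟨A, rfl⟩; positivity⟩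
    (truncatedPseudoinverse u (v ∘ e) σ s) (le_of_eq ?_)
  rw [norm_truncatedPseudoinverse_sub_sq v e u σ s hu hσs G hG,
    compl_map_castLEEmb_filter_lt _ hk]

/-- Theorem 3 of the paper, InvLoss under gradient/embedding-level noise
perturbation: `inf_A ‖A (G x + ε) − x‖² ≤ ∑_(i=k+1)^m ⟨v_i, x⟩² + ∑_(i=1)^k ⟨u_i, ε⟩² / σ_i²`. -/
theorem invLoss_GENP_upper_bound
    (m p : ℕ) (hm : 0 < m) (hp : 0 < p)
    (v : OrthonormalBasis (Fin m) ℝ (EuclideanSpace ℝ (Fin m)))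
    (u : Fin (min m p) → EuclideanSpace ℝ (Fin p)) (hu : Orthonormal ℝ u)
    (σ : Fin (min m p) → ℝ) (hσ : ∀ i, 0 ≤ σ i)
    (G : EuclideanSpace ℝ (Fin m) →ₗ[ℝ] EuclideanSpace ℝ (Fin p))
    (hG : ∀ x, G x = ∑ i : Fin (min m p),
      (σ i * ⟪v (Fin.castLE (min_le_left m p) i), x⟫_ℝ) • u i)
    (k : ℕ) (hk : k ≤ min m p)
    (hσk : ∀ i : Fin (min m p), (i : ℕ) < k → 0 < σ i)
 :
    ∀ (x : EuclideanSpace ℝ (Fin m)) (ε : EuclideanSpace ℝ (Fin p)),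
      (⨅ A : EuclideanSpace ℝ (Fin p) →ₗ[ℝ] EuclideanSpace ℝ (Fin m), ‖A (G x + ε) - x‖ ^ 2)
        ≤ ∑ i ∈ Finset.univ.filter (fun i : Fin m => k ≤ (i : ℕ)), ⟪v i, x⟫_ℝ ^ 2 + ∑ i ∈ Finset.univ.filter (fun i : Fin (min m p) => (i : ℕ) < k), ⟪u i, ε⟫_ℝ ^ 2 / (σ i) ^ 2 :=
  invLoss_GENP_upper_bound_general m p v u hu σ G hG k hk hσk
end

section
/- (Lower bound on the Frobenius residual of any linear attacker under information compression.) Let G be a real p×m matrix with rank G ≤ r ≤ m. Then for every real m×p matrix A, ‖A · G − I_m‖_F² ≥ m − r. -/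
/-!
On the kernel of `A * G`, whose dimension is at least `m - r` by rank–nullity, the residual
`A * G - 1` acts as `-id`, so it maps an orthonormal basis of that kernel to unit vectors. Bessel's
inequality, applied to the rows of the residual, bounds the sum of the squared norms of the images
of any orthonormal family by the squared Frobenius norm.
-/

open scoped InnerProductSpace
open Module Matrix WithLp

theorem Matrix.rank_add_finrank_ker_toLpLin {R m n : Type*} [Field R] [Fintype m] [Fintype n]
    [DecidableEq n] (p q : ENNReal) (A : Matrix m n R) :
    A.rank + finrank R (LinearMap.ker (toLpLin p q A)) = Fintype.card n := by
  rw [rank_eq_finrank_range_toLin A (PiLp.basisFun q R m) (PiLp.basisFun p R n),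
    ← toLpLin_eq_toLin, LinearMap.finrank_range_add_finrank_ker,
    finrank_eq_card_basis (PiLp.basisFun p R n)]

theorem Matrix.sum_norm_sq_toEuclideanLin_le {ι m n : Type*} [Fintype ι] [Fintype m] [Fintype n]
    [DecidableEq n] (M : Matrix m n ℝ) {v : ι → EuclideanSpace ℝ n} (hv : Orthonormal ℝ v) :
    ∑ k, ‖toEuclideanLin M (v k)‖ ^ 2 ≤ ∑ i, ∑ j, M i j ^ 2 := by
  have hrow : ∀ k i, toEuclideanLin M (v k) i = ⟪v k, toLp 2 (M i)⟫_ℝ := fun k i => by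
    rw [EuclideanSpace.inner_eq_star_dotProduct]
    simp [toLpLin_apply, mulVec]
  calc ∑ k, ‖toEuclideanLin M (v k)‖ ^ 2 = ∑ i, ∑ k, ‖⟪v k, toLp 2 (M i)⟫_ℝ‖ ^ 2 := by
        simp only [EuclideanSpace.norm_sq_eq, hrow]
        exact Finset.sum_comm
    _ ≤ ∑ i, ‖toLp 2 (M i)‖ ^ 2 := Finset.sum_le_sum fun i _ => hv.sum_inner_products_le _
    _ = ∑ i, ∑ j, M i j ^ 2 := by simp only [EuclideanSpace.real_norm_sq_eq]

theorem attacker_frobenius_residual_lower_bound_general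
    (m p r : ℕ) (G : Matrix (Fin p) (Fin m) ℝ)
    (hrank : G.rank ≤ r) :
    ∀ A : Matrix (Fin m) (Fin p) ℝ,
      (m : ℝ) - (r : ℝ) ≤ ∑ i : Fin m, ∑ j : Fin m, ((A * G - (1 : Matrix (Fin m) (Fin m) ℝ)) i j) ^ 2 := by
  intro A
  set K := LinearMap.ker (toEuclideanLin (A * G))
  let b := stdOrthonormalBasis ℝ K
  have hdim : (A * G).rank + finrank ℝ K = m := by
    simpa using (A * G).rank_add_finrank_ker_toLpLin 2 2
  have hrankAG : (A * G).rank ≤ r := (rank_mul_le_right A G).trans hrank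
  have hunit : ∀ k, ‖toEuclideanLin (A * G - 1) (b k)‖ = 1 := fun k => by
    rw [map_sub, LinearMap.sub_apply, (b k).2, toLpLin_one, zero_sub, norm_neg]
    exact b.orthonormal.1 k
  calc (m : ℝ) - r ≤ finrank ℝ K := by
        rw [sub_le_iff_le_add]
        exact_mod_cast (by omega : m ≤ finrank ℝ K + r)
    _ = ∑ k, ‖toEuclideanLin (A * G - 1) (b k)‖ ^ 2 := by
        simp only [hunit, one_pow, Finset.sum_const, Finset.card_univ, Fintype.card_fin,
          nsmul_eq_mul, mul_one]
    _ ≤ _ := (A * G - 1).sum_norm_sq_toEuclideanLin_le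
        (b.orthonormal.comp_linearIsometry K.subtypeₗᵢ)

/-- lower bound on the Frobenius residual of any linear attacker under information
compression: if `G` is a real `p × m` matrix with `rank G ≤ r ≤ m`, then for every real `m × p`
matrix `A`, `‖A · G − I_m‖_F² ≥ m − r`. -/
theorem attacker_frobenius_residual_lower_bound
    (m p r : ℕ) (G : Matrix (Fin p) (Fin m) ℝ)
    (hrank : G.rank ≤ r) (hr : r ≤ m) :
    ∀ A : Matrix (Fin m) (Fin p) ℝ,
      (m : ℝ) - (r : ℝ) ≤ ∑ i : Fin m, ∑ j : Fin m, ((A * G - (1 : Matrix (Fin m) (Fin m) ℝ)) i j) ^ 2 :=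
  attacker_frobenius_residual_lower_bound_general m p r G hrank
end
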